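/- Let (qₜ) be a sequence of reals defined by qₜ₊₁ = (1 − αₜ) qₜ + αₜ pₜ, where αₜ ∈ [0,1] and pₜ satisfies |pₜ − q*| ≤ γ |qₜ − q*| + λₜ with 0 ≤ γ < 1 and λₜ → 0, λₜ ≥ 0. If Σₜ αₜ = ∞ and αₜ → 0 (in particular each αₜ < 1 eventually), then qₜ → q*. -/

import Mathlib

/-! Writing `e t = |q t - q*|`, the update and the pseudo-contraction give
`e (t+1) ≤ (1 - β t) e t + β t c t` with `β = (1 - γ) α` and `c = λ / (1 - γ) → 0`.
Once `c t ≤ ε`, the excess `max (e t - ε) 0` is damped by the factors `1 - β t ≤ exp (-β t)`,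
whose product vanishes because `∑ β t = ∞`. -/

open Filter Finset Real Topology

lemma prod_one_sub_le_exp_neg_sum {ι : Type*} (s : Finset ι) {β : ι → ℝ}
    (hβ : ∀ i ∈ s, β i ≤ 1) :
    ∏ i ∈ s, (1 - β i) ≤ exp (-∑ i ∈ s, β i) := by
  rw [← sum_neg_distrib, exp_sum]
  exact prod_le_prod (fun i hi => sub_nonneg.2 (hβ i hi)) fun i _ => one_sub_le_exp_neg _

lemma le_mul_prod_Ico_of_le_one_sub_mul {u β : ℕ → ℝ} {T : ℕ} (hβ : ∀ t, β t ≤ 1)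
    (hu : ∀ t ≥ T, u (t + 1) ≤ (1 - β t) * u t) {t : ℕ} (ht : T ≤ t) :
    u t ≤ u T * ∏ s ∈ Ico T t, (1 - β s) := by
  induction t, ht using Nat.le_induction with
  | base => simp
  | succ t ht ih =>
    calc u (t + 1) ≤ (1 - β t) * u t := hu t ht
      _ ≤ (1 - β t) * (u T * ∏ s ∈ Ico T t, (1 - β s)) :=
          mul_le_mul_of_nonneg_left ih (sub_nonneg.2 (hβ t))
      _ = u T * ∏ s ∈ Ico T (t + 1), (1 - β s) := by rw [prod_Ico_succ_top ht]; ring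

lemma tendsto_zero_of_le_one_sub_mul {u β : ℕ → ℝ} (hu0 : ∀ t, 0 ≤ u t) (hβ : ∀ t, β t ≤ 1)
    (hβsum : Tendsto (fun n => ∑ t ∈ range n, β t) atTop atTop) {T : ℕ}
    (hu : ∀ t ≥ T, u (t + 1) ≤ (1 - β t) * u t) :
    Tendsto u atTop (𝓝 0) := by
  set C := u T * exp (∑ s ∈ range T, β s)
  have hbound : ∀ t ≥ T, u t ≤ C * exp (-∑ s ∈ range t, β s) := fun t ht =>
    calc u t ≤ u T * ∏ s ∈ Ico T t, (1 - β s) := le_mul_prod_Ico_of_le_one_sub_mul hβ hu ht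
      _ ≤ u T * exp (-∑ s ∈ Ico T t, β s) :=
          mul_le_mul_of_nonneg_left (prod_one_sub_le_exp_neg_sum _ fun s _ => hβ s) (hu0 T)
      _ = C * exp (-∑ s ∈ range t, β s) := by
          rw [sum_Ico_eq_sub _ ht, mul_assoc, ← exp_add]; ring_nf
  have hlim : Tendsto (fun t => C * exp (-∑ s ∈ range t, β s)) atTop (𝓝 0) := by
    simpa using (tendsto_exp_atBot.comp (tendsto_neg_atTop_atBot.comp hβsum)).const_mul C
  exact tendsto_of_tendsto_of_tendsto_of_le_of_le' tendsto_const_nhds hlim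
    (Eventually.of_forall hu0) (eventually_atTop.2 ⟨T, hbound⟩)

theorem tendsto_zero_of_le_one_sub_mul_add_mul {e β c : ℕ → ℝ} (he0 : ∀ t, 0 ≤ e t)
    (hβ0 : ∀ t, 0 ≤ β t) (hβ1 : ∀ t, β t ≤ 1)
    (hβsum : Tendsto (fun n => ∑ t ∈ range n, β t) atTop atTop) (hc : Tendsto c atTop (𝓝 0))
    (he : ∀ t, e (t + 1) ≤ (1 - β t) * e t + β t * c t) :
    Tendsto e atTop (𝓝 0) := by
  refine tendsto_order.2 ⟨fun a ha => Eventually.of_forall fun t => ha.trans_le (he0 t),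
    fun ε hε => ?_⟩
  obtain ⟨T, hT⟩ := eventually_atTop.1 (hc.eventually (ge_mem_nhds (half_pos hε)))
  have hexcess : ∀ t ≥ T,
      max (e (t + 1) - ε / 2) 0 ≤ (1 - β t) * max (e t - ε / 2) 0 := fun t ht => by
    have hβc : β t * c t ≤ β t * (ε / 2) := mul_le_mul_of_nonneg_left (hT t ht) (hβ0 t)
    refine max_le ?_ (mul_nonneg (sub_nonneg.2 (hβ1 t)) (le_max_right _ _))
    calc e (t + 1) - ε / 2 ≤ (1 - β t) * (e t - ε / 2) := by linarith [he t]
      _ ≤ (1 - β t) * max (e t - ε / 2) 0 :=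
          mul_le_mul_of_nonneg_left (le_max_left _ _) (sub_nonneg.2 (hβ1 t))
  have hlim := tendsto_zero_of_le_one_sub_mul (u := fun t => max (e t - ε / 2) 0)
    (fun t => le_max_right _ _) hβ1 hβsum hexcess
  filter_upwards [hlim.eventually (gt_mem_nhds (half_pos hε))] with t ht
  linarith [le_max_left (e t - ε / 2) 0]

lemma abs_convex_comb_sub_le {a x y z γ l : ℝ} (ha0 : 0 ≤ a) (ha1 : a ≤ 1)
    (hy : |y - z| ≤ γ * |x - z| + l) :
    |(1 - a) * x + a * y - z| ≤ (1 - (1 - γ) * a) * |x - z| + a * l :=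
  calc |(1 - a) * x + a * y - z| = |(1 - a) * (x - z) + a * (y - z)| := by congr 1; ring
    _ ≤ (1 - a) * |x - z| + a * |y - z| := by
        refine (abs_add_le _ _).trans_eq ?_
        rw [abs_mul, abs_mul, abs_of_nonneg (sub_nonneg.2 ha1), abs_of_nonneg ha0]
    _ ≤ (1 - a) * |x - z| + a * (γ * |x - z| + l) := by gcongr
    _ = (1 - (1 - γ) * a) * |x - z| + a * l := by ring

theorem stmt_8_general (α lam p q : ℕ → ℝ) (qstar γ : ℝ)
    (hγ0 : 0 ≤ γ) (hγ1 : γ < 1)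
    (hα0 : ∀ t, 0 ≤ α t) (hα1 : ∀ t, α t ≤ 1)
    (hαdiv : Tendsto (fun n => ∑ t ∈ Finset.range n, α t) atTop atTop)
    (hlamto0 : Tendsto lam atTop (nhds 0))
    (hupd : ∀ t, q (t + 1) = (1 - α t) * q t + α t * p t)
    (hpseudo : ∀ t, |p t - qstar| ≤ γ * |q t - qstar| + lam t) :
    Tendsto q atTop (nhds qstar) := by
  have hγ : 0 < 1 - γ := sub_pos.2 hγ1
  have hstep : ∀ t, |q (t + 1) - qstar|
      ≤ (1 - (1 - γ) * α t) * |q t - qstar| + (1 - γ) * α t * (lam t / (1 - γ)) := fun t => by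
    rw [hupd]
    refine (abs_convex_comb_sub_le (hα0 t) (hα1 t) (hpseudo t)).trans_eq ?_
    field_simp
  have hsum : Tendsto (fun n => ∑ t ∈ range n, (1 - γ) * α t) atTop atTop := by
    simpa only [← mul_sum] using hαdiv.const_mul_atTop hγ
  rw [tendsto_iff_norm_sub_tendsto_zero]
  simp only [Real.norm_eq_abs]
  exact tendsto_zero_of_le_one_sub_mul_add_mul (fun t => abs_nonneg _)
    (fun t => mul_nonneg hγ.le (hα0 t)) (fun t => mul_le_one₀ (by linarith) (hα0 t) (hα1 t))
    hsum (by simpa using hlamto0.div_const (1 - γ)) hstep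

theorem stmt_8 (α lam p q : ℕ → ℝ) (qstar γ : ℝ)
    (hγ0 : 0 ≤ γ) (hγ1 : γ < 1)
    (hα0 : ∀ t, 0 ≤ α t) (hα1 : ∀ t, α t ≤ 1)
    (hαdiv : Tendsto (fun n => ∑ t ∈ Finset.range n, α t) atTop atTop)
    (hαto0 : Tendsto α atTop (nhds 0))
    (hlam0 : ∀ t, 0 ≤ lam t) (hlamto0 : Tendsto lam atTop (nhds 0))
    (hupd : ∀ t, q (t + 1) = (1 - α t) * q t + α t * p t)
    (hpseudo : ∀ t, |p t - qstar| ≤ γ * |q t - qstar| + lam t) :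
    Tendsto q atTop (nhds qstar) :=
  stmt_8_general α lam p q qstar γ hγ0 hγ1 hα0 hα1 hαdiv hlamto0 hupd hpseudo
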